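/- arXiv:1112.1977 — 2 statements merged into one kernel-verified Lean document; each statement's English description precedes it below -/
import Mathlib

section
/- Second-order cumulant of the spatial discrete Fourier transform: for a mean-zero stationary field W with absolutely summable γ, Cov(W̃(-λ), W̃(-ω)) = Σ_h γ_h e^{iω·h} Σ_{t ∈ grid overlap} e^{i(λ+ω)·t}; in particular, when λ = -ω this equals N² F(-ω) + o(N²) as N → ∞ (assuming Σ_h |h1||h2||γ_h| < ∞), while for λ + ω fixed with both coordinates nonzero Fourier frequencies differing from 0, it is o(N²). -/
open MeasureTheory Filter

private lemma geom_key' {z : ℂ} (hz0 : z ≠ 0) (a : ℤ) : ∀ b : ℤ, a - 1 ≤ b →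
    (z - 1) * ∑ t ∈ Finset.Icc a b, z ^ t = z ^ (b + 1) - z ^ a := by
  refine Int.le_induction ?_ ?_
  · rw [show a - 1 + 1 = a by ring]
    simp [Finset.Icc_eq_empty_of_lt (by omega : a - 1 < a)]
  · intro n hn ih
    have hins : Finset.Icc a (n + 1) = insert (n + 1) (Finset.Icc a n) := by
      ext x; simp only [Finset.mem_Icc, Finset.mem_insert]; omega
    rw [hins, Finset.sum_insert (by simp [Finset.mem_Icc])]
    rw [mul_add, ih]
    rw [zpow_add_one₀ hz0 (n + 1)]
    ring

private lemma geom_bound' {z : ℂ} (hz1 : z ≠ 1) (hz : ‖z‖ = 1) (a b : ℤ) :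
    ‖∑ t ∈ Finset.Icc a b, z ^ t‖ ≤ 2 / ‖z - 1‖ := by
  have hz0 : z ≠ 0 := by intro h; rw [h] at hz; simp at hz
  have hzne : 0 < ‖z - 1‖ := by
    rw [norm_pos_iff]; exact sub_ne_zero.mpr hz1
  rcases lt_or_ge b (a - 1) with h | h
  · rw [Finset.Icc_eq_empty_of_lt (by omega)]
    simp only [Finset.sum_empty, norm_zero]; positivity
  · have key := geom_key' hz0 a b h
    have hnorm : ‖z - 1‖ * ‖∑ t ∈ Finset.Icc a b, z ^ t‖ ≤ 2 := by
      rw [← norm_mul, key]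
      calc ‖z ^ (b + 1) - z ^ a‖ ≤ ‖z ^ (b + 1)‖ + ‖z ^ a‖ := norm_sub_le _ _
        _ = 2 := by rw [norm_zpow, norm_zpow, hz]; norm_num
    rw [le_div_iff₀ hzne]
    linarith

private lemma filter_Icc' (N a : ℤ) :
    (Finset.Icc 1 N).filter (fun t => t + a ∈ Finset.Icc 1 N) =
      Finset.Icc (max 1 (1 - a)) (min N (N - a)) := by
  ext x; simp only [Finset.mem_filter, Finset.mem_Icc, le_min_iff, max_le_iff,
    le_max_iff, min_le_iff]
  omega

private lemma filter_Icc_card' (N a : ℤ) :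
    ((Finset.Icc 1 N).filter (fun t => t + a ∈ Finset.Icc 1 N)).card =
      (N - |a|).toNat := by
  rw [filter_Icc', Int.card_Icc]
  rcases abs_cases a with ⟨h1, _⟩ | ⟨h1, _⟩ <;> omega

private lemma filter_grid' (N : ℤ) (h : ℤ × ℤ) :
    ((Finset.Icc 1 N ×ˢ Finset.Icc 1 N).filter
        (fun t => t + h ∈ Finset.Icc 1 N ×ˢ Finset.Icc 1 N)) =
      ((Finset.Icc 1 N).filter (fun t => t + h.1 ∈ Finset.Icc 1 N)) ×ˢ
        ((Finset.Icc 1 N).filter (fun t => t + h.2 ∈ Finset.Icc 1 N)) := by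
  ext ⟨x, y⟩
  simp only [Finset.mem_filter, Finset.mem_product, Prod.fst_add, Prod.snd_add]
  tauto

private lemma norm_exp_I_mul' (x y : ℝ) (m n : ℤ) :
    ‖Complex.exp (Complex.I * ((x : ℂ) * (m : ℂ) + (y : ℂ) * (n : ℂ)))‖ = 1 := by
  have : Complex.I * ((x : ℂ) * (m : ℂ) + (y : ℂ) * (n : ℂ)) =
      Complex.I * (((x * m + y * n : ℝ)) : ℂ) := by push_cast; ring
  rw [this, Complex.norm_exp]
  simp [Complex.mul_re]

private lemma exp_flip' (a b : ℝ) (m n : ℤ) :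
    Complex.exp (-Complex.I * (((-a : ℝ) : ℂ) * (m : ℂ) + ((-b : ℝ) : ℂ) * (n : ℂ))) =
    Complex.exp (Complex.I * ((a : ℂ) * (m : ℂ) + (b : ℂ) * (n : ℂ))) := by
  congr 1; push_cast; ring

/-- Second-order cumulant of the spatial discrete Fourier
transform: Cov(W̃(-λ), W̃(-ω)) = Σ_h γ_h e^{iω·h} Σ_{t : t,t+h ∈ grid}
e^{i(λ+ω)·t}; in particular when λ = -ω it is asymptotic to N²F(-ω), while for
λ+ω with both coordinates away from 0 (mod 2π) it is o(N²). -/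
theorem dft_second_cumulant {Ω : Type*} [MeasurableSpace Ω] (μ : Measure Ω)
    [IsProbabilityMeasure μ]
    (W : ℤ × ℤ → Ω → ℝ) (γ : ℤ × ℤ → ℝ) (F : ℝ × ℝ → ℂ)
    (hint : ∀ t s : ℤ × ℤ, Integrable (fun ω' => W t ω' * W s ω') μ)
    (hmean : ∀ t : ℤ × ℤ, ∫ ω', W t ω' ∂μ = 0)
    (hcov : ∀ t h : ℤ × ℤ, ∫ ω', W t ω' * W (t + h) ω' ∂μ = γ h)
    (hsum : Summable fun h : ℤ × ℤ => |γ h|)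
    (hsum2 : Summable fun h : ℤ × ℤ => |((h.1 : ℤ) : ℝ)| * |((h.2 : ℤ) : ℝ)| * |γ h|)
    (hF : ∀ l : ℝ × ℝ, F l = ∑' h : ℤ × ℤ, (γ h : ℂ) *
      Complex.exp (-Complex.I * ((l.1 : ℂ) * (h.1 : ℂ) + (l.2 : ℂ) * (h.2 : ℂ))))
    (Wft : ℕ → ℝ × ℝ → Ω → ℂ)
    (hWft : ∀ (N : ℕ) (l : ℝ × ℝ) (ω' : Ω), Wft N l ω' =
      ∑ t ∈ (Finset.Icc (1 : ℤ) (N : ℤ)) ×ˢ (Finset.Icc (1 : ℤ) (N : ℤ)),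
        (W t ω' : ℂ) *
          Complex.exp (-Complex.I * ((l.1 : ℂ) * (t.1 : ℂ) + (l.2 : ℂ) * (t.2 : ℂ)))) :
    (∀ N : ℕ, 0 < N → ∀ l w : ℝ × ℝ,
      (∫ ω', Wft N (-l) ω' * Wft N (-w) ω' ∂μ) =
        ∑ h ∈ (Finset.Icc (-(N : ℤ) + 1) ((N : ℤ) - 1)) ×ˢ
            (Finset.Icc (-(N : ℤ) + 1) ((N : ℤ) - 1)),
          (γ h : ℂ) *
            Complex.exp (Complex.I * ((w.1 : ℂ) * (h.1 : ℂ) + (w.2 : ℂ) * (h.2 : ℂ))) *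
            ∑ t ∈ ((Finset.Icc (1 : ℤ) (N : ℤ)) ×ˢ (Finset.Icc (1 : ℤ) (N : ℤ))).filter
                (fun t => t + h ∈ (Finset.Icc (1 : ℤ) (N : ℤ)) ×ˢ (Finset.Icc (1 : ℤ) (N : ℤ))),
              Complex.exp (Complex.I * (((l.1 + w.1 : ℝ) : ℂ) * (t.1 : ℂ) +
                ((l.2 + w.2 : ℝ) : ℂ) * (t.2 : ℂ)))) ∧
    (∀ w : ℝ × ℝ,
      Tendsto (fun N : ℕ => (∫ ω', Wft N w ω' * Wft N (-w) ω' ∂μ) / (N : ℂ) ^ 2)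
        atTop (nhds (F (-w)))) ∧
    (∀ l w : ℝ × ℝ,
      Complex.exp (Complex.I * ((l.1 + w.1 : ℝ) : ℂ)) ≠ 1 →
      Complex.exp (Complex.I * ((l.2 + w.2 : ℝ) : ℂ)) ≠ 1 →
      Tendsto (fun N : ℕ => (∫ ω', Wft N (-l) ω' * Wft N (-w) ω' ∂μ) / (N : ℂ) ^ 2)
        atTop (nhds 0)) := by
  -- the key covariance identity, valid for every N (including N = 0)
  have key : ∀ (N : ℕ) (l w : ℝ × ℝ),
      (∫ ω', Wft N (-l) ω' * Wft N (-w) ω' ∂μ) =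
        ∑ h ∈ (Finset.Icc (-(N : ℤ) + 1) ((N : ℤ) - 1)) ×ˢ
            (Finset.Icc (-(N : ℤ) + 1) ((N : ℤ) - 1)),
          (γ h : ℂ) *
            Complex.exp (Complex.I * ((w.1 : ℂ) * (h.1 : ℂ) + (w.2 : ℂ) * (h.2 : ℂ))) *
            ∑ t ∈ ((Finset.Icc (1 : ℤ) (N : ℤ)) ×ˢ (Finset.Icc (1 : ℤ) (N : ℤ))).filter
                (fun t => t + h ∈ (Finset.Icc (1 : ℤ) (N : ℤ)) ×ˢ (Finset.Icc (1 : ℤ) (N : ℤ))),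
              Complex.exp (Complex.I * (((l.1 + w.1 : ℝ) : ℂ) * (t.1 : ℂ) +
                ((l.2 + w.2 : ℝ) : ℂ) * (t.2 : ℂ))) := by
    intro N l w
    set G := (Finset.Icc (1 : ℤ) (N : ℤ)) ×ˢ (Finset.Icc (1 : ℤ) (N : ℤ)) with hGdef
    have h1 : ∀ ω', Wft N (-l) ω' * Wft N (-w) ω' =
        ∑ p ∈ G ×ˢ G, ((W p.1 ω' * W p.2 ω' : ℝ) : ℂ) *
          (Complex.exp (Complex.I * ((l.1 : ℂ) * (p.1.1 : ℂ) + (l.2 : ℂ) * (p.1.2 : ℂ))) *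
           Complex.exp (Complex.I * ((w.1 : ℂ) * (p.2.1 : ℂ) + (w.2 : ℂ) * (p.2.2 : ℂ)))) := by
      intro ω'
      rw [hWft, hWft, Finset.sum_mul_sum, ← Finset.sum_product']
      refine Finset.sum_congr rfl fun p _ => ?_
      simp only [Prod.fst_neg, Prod.snd_neg, exp_flip']
      push_cast
      ring
    calc (∫ ω', Wft N (-l) ω' * Wft N (-w) ω' ∂μ)
        = ∑ p ∈ G ×ˢ G, (γ (p.2 - p.1) : ℂ) *
            (Complex.exp (Complex.I * ((l.1 : ℂ) * (p.1.1 : ℂ) + (l.2 : ℂ) * (p.1.2 : ℂ))) *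
             Complex.exp (Complex.I * ((w.1 : ℂ) * (p.2.1 : ℂ) + (w.2 : ℂ) * (p.2.2 : ℂ)))) := by
          rw [integral_congr_ae (Filter.Eventually.of_forall h1)]
          rw [integral_finset_sum _ (fun p _ => ((hint p.1 p.2).ofReal.mul_const _))]
          refine Finset.sum_congr rfl fun p _ => ?_
          rw [integral_mul_const]
          congr 1
          rw [show (∫ ω', ((W p.1 ω' * W p.2 ω' : ℝ) : ℂ) ∂μ)
              = ((∫ ω', W p.1 ω' * W p.2 ω' ∂μ : ℝ) : ℂ) from integral_ofReal]
          have := hcov p.1 (p.2 - p.1)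
          rw [show p.1 + (p.2 - p.1) = p.2 from by ring] at this
          rw [this]
      _ = ∑ x ∈ ((Finset.Icc (-(N : ℤ) + 1) ((N : ℤ) - 1)) ×ˢ
              (Finset.Icc (-(N : ℤ) + 1) ((N : ℤ) - 1))).sigma
              (fun h => G.filter (fun t => t + h ∈ G)),
            (γ x.1 : ℂ) *
              Complex.exp (Complex.I * ((w.1 : ℂ) * (x.1.1 : ℂ) + (w.2 : ℂ) * (x.1.2 : ℂ))) *
              Complex.exp (Complex.I * (((l.1 + w.1 : ℝ) : ℂ) * (x.2.1 : ℂ) +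
                ((l.2 + w.2 : ℝ) : ℂ) * (x.2.2 : ℂ))) := by
          refine Finset.sum_nbij' (fun p => ⟨p.2 - p.1, p.1⟩) (fun x => (x.2, x.2 + x.1))
            ?_ ?_ ?_ ?_ ?_
          · intro p hp
            simp only [hGdef, Finset.mem_sigma, Finset.mem_product, Finset.mem_filter,
              Finset.mem_Icc, Prod.fst_sub, Prod.snd_sub, Prod.fst_add, Prod.snd_add] at hp ⊢
            omega
          · intro x hx
            simp only [hGdef, Finset.mem_sigma, Finset.mem_product, Finset.mem_filter,
              Finset.mem_Icc, Prod.fst_sub, Prod.snd_sub, Prod.fst_add, Prod.snd_add] at hx ⊢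
            omega
          · intro p _
            have : p.1 + (p.2 - p.1) = p.2 := by ring
            simp [this]
          · intro x _
            rcases x with ⟨h, t⟩
            have : t + h - t = h := by ring
            simp [this]
          · intro p _
            rw [mul_assoc]
            congr 1
            rw [← Complex.exp_add, ← Complex.exp_add]
            congr 1
            simp only [Prod.fst_sub, Prod.snd_sub]
            push_cast
            ring
      _ = _ := by
          simp_rw [Finset.mul_sum]
          exact (Finset.sum_sigma'
            ((Finset.Icc (-(N : ℤ) + 1) ((N : ℤ) - 1)) ×ˢ
              (Finset.Icc (-(N : ℤ) + 1) ((N : ℤ) - 1)))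
            (fun h => G.filter (fun t => t + h ∈ G))
            (fun h t => (γ h : ℂ) *
              Complex.exp (Complex.I * ((w.1 : ℂ) * (h.1 : ℂ) + (w.2 : ℂ) * (h.2 : ℂ))) *
              Complex.exp (Complex.I * (((l.1 + w.1 : ℝ) : ℂ) * (t.1 : ℂ) +
                ((l.2 + w.2 : ℝ) : ℂ) * (t.2 : ℂ))))).symm
  refine ⟨fun N _ l w => key N l w, ?_, ?_⟩
  · -- second part: convergence to F(-w)
    intro w
    -- the weight function
    set r : ℕ → ℤ × ℤ → ℝ := fun N h =>
      ((((N : ℤ) - |h.1|) ⊔ 0) * (((N : ℤ) - |h.2|) ⊔ 0) : ℤ) / (N : ℝ) ^ 2 with hr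
    set c : ℤ × ℤ → ℂ := fun h => (γ h : ℂ) *
      Complex.exp (Complex.I * ((w.1 : ℂ) * (h.1 : ℂ) + (w.2 : ℂ) * (h.2 : ℂ))) with hc
    have hnormc : ∀ h, ‖c h‖ = |γ h| := by
      intro h
      rw [hc]
      simp only [norm_mul, norm_exp_I_mul', Complex.norm_real, mul_one, Real.norm_eq_abs]
    have hr01 : ∀ N h, 0 ≤ r N h ∧ r N h ≤ 1 := by
      intro N h
      constructor
      · apply div_nonneg _ (by positivity)
        have : (0 : ℤ) ≤ (((N : ℤ) - |h.1|) ⊔ 0) * (((N : ℤ) - |h.2|) ⊔ 0) :=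
          mul_nonneg (le_max_right _ _) (le_max_right _ _)
        exact_mod_cast this
      · apply div_le_one_of_le₀
        · have f1 : (((N : ℤ) - |h.1|) ⊔ 0) ≤ (N : ℤ) :=
            max_le (sub_le_self _ (abs_nonneg _)) (by positivity)
          have f2 : (((N : ℤ) - |h.2|) ⊔ 0) ≤ (N : ℤ) :=
            max_le (sub_le_self _ (abs_nonneg _)) (by positivity)
          have g1 : (0 : ℤ) ≤ (((N : ℤ) - |h.1|) ⊔ 0) := le_max_right _ _
          have g2 : (0 : ℤ) ≤ (((N : ℤ) - |h.2|) ⊔ 0) := le_max_right _ _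
          have h1 : (((N : ℤ) - |h.1|) ⊔ 0) * (((N : ℤ) - |h.2|) ⊔ 0) ≤ (N : ℤ) ^ 2 := by
            nlinarith
          exact_mod_cast h1
        · positivity
    -- the sequence equals a tsum
    have heq : ∀ N : ℕ,
        (∫ ω', Wft N w ω' * Wft N (-w) ω' ∂μ) / (N : ℂ) ^ 2 =
          ∑' h : ℤ × ℤ, c h * ((r N h : ℝ) : ℂ) := by
      intro N
      have hkey := key N (-w) w
      rw [neg_neg] at hkey
      rw [hkey]
      have hcount : ∀ h : ℤ × ℤ,
          (∑ t ∈ ((Finset.Icc (1 : ℤ) (N : ℤ)) ×ˢ (Finset.Icc (1 : ℤ) (N : ℤ))).filter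
              (fun t => t + h ∈ (Finset.Icc (1 : ℤ) (N : ℤ)) ×ˢ (Finset.Icc (1 : ℤ) (N : ℤ))),
            Complex.exp (Complex.I * ((((-w).1 + w.1 : ℝ) : ℂ) * (t.1 : ℂ) +
              (((-w).2 + w.2 : ℝ) : ℂ) * (t.2 : ℂ))))
            = ((((N : ℤ) - |h.1|).toNat * ((N : ℤ) - |h.2|).toNat : ℕ) : ℂ) := by
        intro h
        have : ∀ t : ℤ × ℤ, Complex.exp (Complex.I * ((((-w).1 + w.1 : ℝ) : ℂ) * (t.1 : ℂ) +
            (((-w).2 + w.2 : ℝ) : ℂ) * (t.2 : ℂ))) = 1 := by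
          intro t
          simp [Prod.fst_neg, Prod.snd_neg]
        rw [Finset.sum_congr rfl fun t _ => this t, Finset.sum_const, nsmul_eq_mul, mul_one]
        congr 1
        rw [filter_grid', Finset.card_product, filter_Icc_card', filter_Icc_card']
      rw [Finset.sum_congr rfl fun h _ => by rw [hcount h]]
      rw [tsum_eq_sum (s := (Finset.Icc (-(N : ℤ) + 1) ((N : ℤ) - 1)) ×ˢ
          (Finset.Icc (-(N : ℤ) + 1) ((N : ℤ) - 1)))
        (by
          intro h hh
          have hh' : ¬((-(N : ℤ) + 1 ≤ h.1 ∧ h.1 ≤ (N : ℤ) - 1) ∧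
              (-(N : ℤ) + 1 ≤ h.2 ∧ h.2 ≤ (N : ℤ) - 1)) := by
            simpa [Finset.mem_product, Finset.mem_Icc] using hh
          have hmax : (((N : ℤ) - |h.1|) ⊔ 0) = 0 ∨ (((N : ℤ) - |h.2|) ⊔ 0) = 0 := by
            simp only [Int.abs_eq_natAbs] at hh' ⊢
            omega
          have hz0 : ((((N : ℤ) - |h.1|) ⊔ 0) * (((N : ℤ) - |h.2|) ⊔ 0) : ℤ) = 0 := by
            rcases hmax with e | e <;> rw [e] <;> ring
          have hz : r N h = 0 := by
            simp only [hr, hz0, Int.cast_zero, zero_div]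
          rw [hz]
          simp)]
      rw [Finset.sum_div]
      refine Finset.sum_congr rfl fun h _ => ?_
      rw [hc, mul_div_assoc]
      congr 1
      rw [show ((((N : ℤ) - |h.1|).toNat * ((N : ℤ) - |h.2|).toNat : ℕ) : ℂ) / (N : ℂ) ^ 2
          = ((((((N : ℤ) - |h.1|).toNat * ((N : ℤ) - |h.2|).toNat : ℕ) : ℝ) / (N : ℝ) ^ 2 : ℝ) : ℂ)
        from by push_cast; ring]
      congr 1
      have e1 : ((((N : ℤ) - |h.1|).toNat : ℕ) : ℝ) = ((((N : ℤ) - |h.1|) ⊔ 0 : ℤ) : ℝ) := by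
        exact_mod_cast congrArg (fun z : ℤ => (z : ℝ)) (Int.toNat_eq_max ((N : ℤ) - |h.1|))
      have e2 : ((((N : ℤ) - |h.2|).toNat : ℕ) : ℝ) = ((((N : ℤ) - |h.2|) ⊔ 0 : ℤ) : ℝ) := by
        exact_mod_cast congrArg (fun z : ℤ => (z : ℝ)) (Int.toNat_eq_max ((N : ℤ) - |h.2|))
      rw [hr]
      rw [Nat.cast_mul, e1, e2]
      push_cast
      ring
    have hfun : (fun N : ℕ => (∫ ω', Wft N w ω' * Wft N (-w) ω' ∂μ) / (N : ℂ) ^ 2) =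
        fun N : ℕ => ∑' h : ℤ × ℤ, c h * ((r N h : ℝ) : ℂ) := funext heq
    rw [hfun]
    have hFval : F (-w) = ∑' h : ℤ × ℤ, c h := by
      rw [hF (-w)]
      refine tsum_congr fun h => ?_
      rw [hc]
      congr 1
      simp only [Prod.fst_neg, Prod.snd_neg, Complex.ofReal_neg]
      congr 1
      ring
    rw [hFval]
    refine tendsto_tsum_of_dominated_convergence (bound := fun h => |γ h|) hsum ?_ ?_
    · intro h
      have hrlim : Tendsto (fun N : ℕ => r N h) atTop (nhds 1) := by
        have hinv : Tendsto (fun N : ℕ => ((N : ℝ))⁻¹) atTop (nhds 0) :=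
          tendsto_inv_atTop_zero.comp tendsto_natCast_atTop_atTop
        have hmul : Tendsto (fun N : ℕ =>
            (1 - (|h.1| : ℝ) * ((N : ℝ))⁻¹) * (1 - (|h.2| : ℝ) * ((N : ℝ))⁻¹)) atTop
            (nhds ((1 - (|h.1| : ℝ) * 0) * (1 - (|h.2| : ℝ) * 0))) :=
          ((tendsto_const_nhds.sub ((hinv.const_mul _))).mul
            (tendsto_const_nhds.sub ((hinv.const_mul _))))
        rw [show ((1 - (|h.1| : ℝ) * 0) * (1 - (|h.2| : ℝ) * 0)) = 1 by ring] at hmul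
        refine hmul.congr' ?_
        filter_upwards [eventually_ge_atTop (h.1.natAbs ⊔ h.2.natAbs ⊔ 1)] with N hN
        have hN1 : 1 ≤ N := le_trans (le_max_right _ _) hN
        have hNa : |h.1| ≤ (N : ℤ) := by
          rw [Int.abs_eq_natAbs]
          exact_mod_cast le_trans (le_trans (le_max_left _ _) (le_max_left _ _)) hN
        have hNb : |h.2| ≤ (N : ℤ) := by
          rw [Int.abs_eq_natAbs]
          exact_mod_cast le_trans (le_trans (le_max_right _ _) (le_max_left _ _)) hN
        have m1 : ((N : ℤ) - |h.1|) ⊔ 0 = (N : ℤ) - |h.1| := max_eq_left (by linarith)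
        have m2 : ((N : ℤ) - |h.2|) ⊔ 0 = (N : ℤ) - |h.2| := max_eq_left (by linarith)
        simp only [hr, m1, m2]
        have hNpos : (0 : ℝ) < (N : ℝ) := by exact_mod_cast hN1
        push_cast
        rw [eq_div_iff (by positivity : ((N : ℝ) ^ 2) ≠ 0)]
        field_simp
        try ring
        try exact Or.inl trivial
      have : Tendsto (fun N : ℕ => ((r N h : ℝ) : ℂ)) atTop (nhds ((1 : ℝ) : ℂ)) :=
        (Complex.continuous_ofReal.tendsto _).comp hrlim
      simpa using this.const_mul (c h)
    · filter_upwards with N h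
      rw [norm_mul, hnormc h]
      have := hr01 N h
      calc |γ h| * ‖((r N h : ℝ) : ℂ)‖ = |γ h| * |r N h| := by
            rw [Complex.norm_real, Real.norm_eq_abs]
        _ ≤ |γ h| * 1 := by
            apply mul_le_mul_of_nonneg_left _ (abs_nonneg _)
            rw [abs_of_nonneg this.1]; exact this.2
        _ = |γ h| := mul_one _
  · -- third part: o(N²) away from the zero frequency
    intro l w hl1 hl2
    set z1 := Complex.exp (Complex.I * ((l.1 + w.1 : ℝ) : ℂ)) with hz1
    set z2 := Complex.exp (Complex.I * ((l.2 + w.2 : ℝ) : ℂ)) with hz2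
    have hz1n : ‖z1‖ = 1 := by
      rw [hz1, Complex.norm_exp]; simp [Complex.mul_re]
    have hz2n : ‖z2‖ = 1 := by
      rw [hz2, Complex.norm_exp]; simp [Complex.mul_re]
    set C : ℝ := (∑' h : ℤ × ℤ, |γ h|) * (2 / ‖z1 - 1‖ * (2 / ‖z2 - 1‖)) with hC
    have hbound : ∀ N : ℕ, ‖∫ ω', Wft N (-l) ω' * Wft N (-w) ω' ∂μ‖ ≤ C := by
      intro N
      rw [key N l w]
      have hterm : ∀ h : ℤ × ℤ,
          ‖(γ h : ℂ) *
            Complex.exp (Complex.I * ((w.1 : ℂ) * (h.1 : ℂ) + (w.2 : ℂ) * (h.2 : ℂ))) *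
            ∑ t ∈ ((Finset.Icc (1 : ℤ) (N : ℤ)) ×ˢ (Finset.Icc (1 : ℤ) (N : ℤ))).filter
                (fun t => t + h ∈ (Finset.Icc (1 : ℤ) (N : ℤ)) ×ˢ (Finset.Icc (1 : ℤ) (N : ℤ))),
              Complex.exp (Complex.I * (((l.1 + w.1 : ℝ) : ℂ) * (t.1 : ℂ) +
                ((l.2 + w.2 : ℝ) : ℂ) * (t.2 : ℂ)))‖ ≤
            |γ h| * (2 / ‖z1 - 1‖ * (2 / ‖z2 - 1‖)) := by
        intro h
        rw [norm_mul, norm_mul, norm_exp_I_mul', mul_one, Complex.norm_real,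
          Real.norm_eq_abs]
        apply mul_le_mul_of_nonneg_left _ (abs_nonneg _)
        -- inner sum is a product of two geometric sums
        have hsplit : (∑ t ∈ ((Finset.Icc (1 : ℤ) (N : ℤ)) ×ˢ
              (Finset.Icc (1 : ℤ) (N : ℤ))).filter
              (fun t => t + h ∈ (Finset.Icc (1 : ℤ) (N : ℤ)) ×ˢ (Finset.Icc (1 : ℤ) (N : ℤ))),
            Complex.exp (Complex.I * (((l.1 + w.1 : ℝ) : ℂ) * (t.1 : ℂ) +
              ((l.2 + w.2 : ℝ) : ℂ) * (t.2 : ℂ)))) =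
            (∑ t1 ∈ Finset.Icc (max 1 (1 - h.1)) (min (N : ℤ) ((N : ℤ) - h.1)), z1 ^ t1) *
            (∑ t2 ∈ Finset.Icc (max 1 (1 - h.2)) (min (N : ℤ) ((N : ℤ) - h.2)), z2 ^ t2) := by
          rw [filter_grid', filter_Icc', filter_Icc', Finset.sum_mul_sum,
            ← Finset.sum_product']
          refine Finset.sum_congr rfl fun t _ => ?_
          rw [hz1, hz2, show Complex.I * ((l.1 + w.1 : ℝ) : ℂ) =
              (Complex.I * ((l.1 + w.1 : ℝ) : ℂ)) from rfl]
          rw [show (Complex.I * (((l.1 + w.1 : ℝ) : ℂ) * (t.1 : ℂ) +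
              ((l.2 + w.2 : ℝ) : ℂ) * (t.2 : ℂ))) =
              ((t.1 : ℂ) * (Complex.I * ((l.1 + w.1 : ℝ) : ℂ)) +
               (t.2 : ℂ) * (Complex.I * ((l.2 + w.2 : ℝ) : ℂ))) from by ring]
          rw [Complex.exp_add, Complex.exp_int_mul, Complex.exp_int_mul]
        rw [hsplit, norm_mul]
        exact mul_le_mul (geom_bound' hl1 hz1n _ _) (geom_bound' hl2 hz2n _ _)
          (norm_nonneg _) (by positivity)
      calc ‖∑ h ∈ (Finset.Icc (-(N : ℤ) + 1) ((N : ℤ) - 1)) ×ˢ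
              (Finset.Icc (-(N : ℤ) + 1) ((N : ℤ) - 1)), _‖
          ≤ ∑ h ∈ (Finset.Icc (-(N : ℤ) + 1) ((N : ℤ) - 1)) ×ˢ
              (Finset.Icc (-(N : ℤ) + 1) ((N : ℤ) - 1)),
              |γ h| * (2 / ‖z1 - 1‖ * (2 / ‖z2 - 1‖)) :=
            norm_sum_le_of_le _ (fun h _ => hterm h)
        _ ≤ C := by
            rw [hC, ← Finset.sum_mul]
            apply mul_le_mul_of_nonneg_right _ (by positivity)
            exact Summable.sum_le_tsum _ (fun _ _ => abs_nonneg _) hsum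
    have hCnn : 0 ≤ C := le_trans (norm_nonneg _) (hbound 0)
    apply squeeze_zero_norm (a := fun N : ℕ => C / (N : ℝ) ^ 2)
    · intro N
      rw [norm_div, norm_pow, Complex.norm_natCast]
      exact div_le_div_of_nonneg_right (hbound N) (by positivity)
    · have h2 : Tendsto (fun N : ℕ => ((N : ℝ)) ^ 2) atTop atTop :=
        (tendsto_pow_atTop two_ne_zero).comp tendsto_natCast_atTop_atTop
      exact tendsto_const_nhds.div_atTop h2
end

section
/- Fisher information of the cepstral model: for the cepstral spectral model F_θ(λ) = exp(Σ_{j,k} θ_{j,k} e^{-ijλ1-ikλ2}) with θ_{j,k} = θ_{-j,-k}, the asymptotic Fisher information matrix (1/2)·H(θ) with H(θ) = <∇log F_θ (∇log F_θ)'> is: 1/2 for the entry corresponding to θ_{0,0}, and 1 (identity) for all other free parameters, with all off-diagonal entries zero. Hence the asymptotic variance of each estimated cepstral coefficient is N^{-2} (2N^{-2} for θ_{0,0}). -/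
open Real intervalIntegral

lemma cos_lin_int (m : ℤ) (hm : m ≠ 0) (c : ℝ) :
    ∫ x in (-Real.pi)..Real.pi, Real.cos ((m:ℝ) * x + c) = 0 := by
  have hm' : (m:ℝ) ≠ 0 := by exact_mod_cast hm
  rw [intervalIntegral.integral_comp_mul_add Real.cos hm' c, integral_cos, smul_eq_mul]
  have h1 : Real.sin ((m:ℝ)*π) = 0 := Real.sin_int_mul_pi m
  have h2 : (m:ℝ)*(-π) + c = c - (m:ℝ)*π := by ring
  rw [h2, Real.sin_add, Real.sin_sub, h1]
  ring

lemma inner_int (m n : ℤ) (l1 : ℝ) :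
    ∫ l2 in (-Real.pi)..Real.pi, Real.cos ((m:ℝ)*l1+(n:ℝ)*l2)
      = if n = 0 then 2*π*Real.cos ((m:ℝ)*l1) else 0 := by
  by_cases hn : n = 0
  · subst hn
    simp only [Int.cast_zero, zero_mul, add_zero, if_true]
    rw [intervalIntegral.integral_const]
    simp [two_mul]
  · simp only [hn, if_false]
    have : ∀ l2 : ℝ, (m:ℝ)*l1 + (n:ℝ)*l2 = (n:ℝ)*l2 + (m:ℝ)*l1 := fun l2 => by ring
    simp_rw [this]
    exact cos_lin_int n hn _

lemma outer_int (m n : ℤ) :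
    ∫ l1 in (-Real.pi)..Real.pi, (if n = 0 then 2*π*Real.cos ((m:ℝ)*l1) else 0)
      = if (m, n) = ((0:ℤ), (0:ℤ)) then 4*π^2 else 0 := by
  by_cases hn : n = 0
  · subst hn
    simp only [if_true]
    by_cases hm : m = 0
    · subst hm
      simp only [Int.cast_zero, zero_mul, Real.cos_zero, mul_one, if_true,
        intervalIntegral.integral_const, smul_eq_mul]
      ring
    · rw [if_neg (by simp [hm])]
      rw [intervalIntegral.integral_const_mul]
      have h := cos_lin_int m hm 0
      simp only [add_zero] at h
      rw [h]
      ring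
  · simp [hn]

lemma Dsum (p q r s : ℤ) :
    ∫ l1 in (-Real.pi)..Real.pi, ∫ l2 in (-Real.pi)..Real.pi,
        (Real.cos ((p:ℝ)*l1+(q:ℝ)*l2) + Real.cos ((r:ℝ)*l1+(s:ℝ)*l2))
      = (if (p, q) = ((0:ℤ), (0:ℤ)) then 4*π^2 else 0)
        + (if (r, s) = ((0:ℤ), (0:ℤ)) then 4*π^2 else 0) := by
  have hc : ∀ (m n : ℤ) (l1 : ℝ),
      IntervalIntegrable (fun l2 => Real.cos ((m:ℝ)*l1+(n:ℝ)*l2)) MeasureTheory.volume (-π) π := by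
    intro m n l1
    apply Continuous.intervalIntegrable
    fun_prop
  have h1 : ∀ l1 : ℝ, ∫ l2 in (-Real.pi)..Real.pi,
      (Real.cos ((p:ℝ)*l1+(q:ℝ)*l2) + Real.cos ((r:ℝ)*l1+(s:ℝ)*l2))
      = (if q = 0 then 2*π*Real.cos ((p:ℝ)*l1) else 0)
        + (if s = 0 then 2*π*Real.cos ((r:ℝ)*l1) else 0) := by
    intro l1
    rw [intervalIntegral.integral_add (hc p q l1) (hc r s l1), inner_int, inner_int]
  simp_rw [h1]
  have hi : ∀ (m n : ℤ), IntervalIntegrable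
      (fun l1 => if n = 0 then 2*π*Real.cos ((m:ℝ)*l1) else 0) MeasureTheory.volume (-π) π := by
    intro m n
    apply Continuous.intervalIntegrable
    split <;> fun_prop
  rw [intervalIntegral.integral_add (hi p q) (hi r s), outer_int, outer_int]



/-- Gradient of the log spectrum of the cepstral model with respect to the
free parameter indexed by the mirror pair {(j,k),(-j,-k)}:
∂ log F_θ / ∂θ_{j,k} = 2cos(jλ₁+kλ₂) for (j,k) ≠ (0,0), and = 1 for θ₀₀. -/
noncomputable def cepstralGrad (c : ℤ × ℤ) (l : ℝ × ℝ) : ℝ :=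
  if c = (0, 0) then 1 else 2 * Real.cos ((c.1 : ℝ) * l.1 + (c.2 : ℝ) * l.2)

/-- Normalized inner product <g_a g_b> over [-π,π]². -/
noncomputable def cepstralInner (a b : ℤ × ℤ) : ℝ :=
  (1 / (4 * Real.pi ^ 2)) *
    ∫ l1 in (-Real.pi)..Real.pi, ∫ l2 in (-Real.pi)..Real.pi,
      cepstralGrad a (l1, l2) * cepstralGrad b (l1, l2)

/-- Fisher information of the cepstral model: the Hessian
H(θ) = <∇log F_θ (∇log F_θ)'> is diagonal, with entry 1 for θ₀₀ and entry 2
for every other free cepstral parameter; all cross terms between distinct free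
parameters (i.e. a ≠ b and a ≠ -b) vanish.  Hence the Fisher information
matrix H/2 equals 1/2 at θ₀₀ and the identity elsewhere. -/
theorem cepstral_fisher_information (a b : ℤ × ℤ) :
    cepstralInner (0, 0) (0, 0) = 1 ∧
    (a ≠ (0, 0) → cepstralInner a a = 2) ∧
    (a ≠ b → a ≠ -b → cepstralInner a b = 0) := by
  have hpi : Real.pi ≠ 0 := Real.pi_ne_zero
  refine ⟨?_, ?_, ?_⟩
  · have key : ∀ l1 l2 : ℝ, cepstralGrad (0,0) (l1, l2) * cepstralGrad (0,0) (l1, l2) = 1 := by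
      intro l1 l2; simp [cepstralGrad]
    unfold cepstralInner
    simp_rw [key]
    simp only [intervalIntegral.integral_const, smul_eq_mul, mul_one]
    field_simp
    ring
  · intro ha
    have key : ∀ l1 l2 : ℝ, cepstralGrad a (l1, l2) * cepstralGrad a (l1, l2)
        = 2 * (Real.cos (((2*a.1:ℤ):ℝ)*l1 + ((2*a.2:ℤ):ℝ)*l2)
            + Real.cos (((0:ℤ):ℝ)*l1 + ((0:ℤ):ℝ)*l2)) := by
      intro l1 l2
      simp only [cepstralGrad, ha, if_false, Int.cast_zero, zero_mul, add_zero, Real.cos_zero]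
      have h2 : ((2*a.1:ℤ):ℝ)*l1 + ((2*a.2:ℤ):ℝ)*l2 = 2*((a.1:ℝ)*l1 + (a.2:ℝ)*l2) := by
        push_cast; ring
      rw [h2, Real.cos_two_mul]
      ring
    unfold cepstralInner
    simp_rw [key, intervalIntegral.integral_const_mul]
    rw [Dsum]
    have h1 : ((2*a.1, 2*a.2) : ℤ × ℤ) ≠ (0, 0) := by
      simp only [ne_eq, Prod.mk.injEq, not_and]
      intro h h'
      exact ha (Prod.ext_iff.mpr ⟨by omega, by omega⟩)
    rw [if_neg h1, if_pos rfl]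
    field_simp
    ring
  · intro hab hab'
    by_cases ha : a = (0, 0)
    · subst ha
      have hb : b ≠ (0, 0) := fun h => hab h.symm
      have key : ∀ l1 l2 : ℝ, cepstralGrad (0,0) (l1, l2) * cepstralGrad b (l1, l2)
          = Real.cos ((b.1:ℝ)*l1 + (b.2:ℝ)*l2) + Real.cos ((b.1:ℝ)*l1 + (b.2:ℝ)*l2) := by
        intro l1 l2
        simp only [cepstralGrad, hb, if_false, if_true, if_pos rfl, one_mul]
        ring
      unfold cepstralInner
      simp_rw [key]
      rw [Dsum]
      have hb' : ((b.1, b.2) : ℤ × ℤ) ≠ (0, 0) := by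
        simp only [ne_eq, Prod.mk.injEq, not_and]
        intro h h'
        exact hb (Prod.ext_iff.mpr ⟨h, h'⟩)
      rw [if_neg hb']
      ring
    · by_cases hbz : b = (0, 0)
      · subst hbz
        have key : ∀ l1 l2 : ℝ, cepstralGrad a (l1, l2) * cepstralGrad (0,0) (l1, l2)
            = Real.cos ((a.1:ℝ)*l1 + (a.2:ℝ)*l2) + Real.cos ((a.1:ℝ)*l1 + (a.2:ℝ)*l2) := by
          intro l1 l2
          simp only [cepstralGrad, ha, if_false, if_true, if_pos rfl, mul_one]
          ring
        unfold cepstralInner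
        simp_rw [key]
        rw [Dsum]
        have ha' : ((a.1, a.2) : ℤ × ℤ) ≠ (0, 0) := by
          simp only [ne_eq, Prod.mk.injEq, not_and]
          intro h h'
          exact ha (Prod.ext_iff.mpr ⟨h, h'⟩)
        rw [if_neg ha']
        ring
      · have key : ∀ l1 l2 : ℝ, cepstralGrad a (l1, l2) * cepstralGrad b (l1, l2)
            = 2 * (Real.cos (((a.1+b.1:ℤ):ℝ)*l1 + ((a.2+b.2:ℤ):ℝ)*l2)
                + Real.cos (((a.1-b.1:ℤ):ℝ)*l1 + ((a.2-b.2:ℤ):ℝ)*l2)) := by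
          intro l1 l2
          simp only [cepstralGrad, ha, hbz, if_false]
          have h1 : ((a.1+b.1:ℤ):ℝ)*l1 + ((a.2+b.2:ℤ):ℝ)*l2
              = ((a.1:ℝ)*l1 + (a.2:ℝ)*l2) + ((b.1:ℝ)*l1 + (b.2:ℝ)*l2) := by push_cast; ring
          have h2 : ((a.1-b.1:ℤ):ℝ)*l1 + ((a.2-b.2:ℤ):ℝ)*l2
              = ((a.1:ℝ)*l1 + (a.2:ℝ)*l2) - ((b.1:ℝ)*l1 + (b.2:ℝ)*l2) := by push_cast; ring
          set u := (a.1:ℝ)*l1 + (a.2:ℝ)*l2 with hu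
          set v := (b.1:ℝ)*l1 + (b.2:ℝ)*l2 with hv
          rw [h1, h2, Real.cos_add_cos]
          have e1 : (u + v + (u - v))/2 = u := by ring
          have e2 : (u + v - (u - v))/2 = v := by ring
          rw [e1, e2]
          ring
        unfold cepstralInner
        simp_rw [key, intervalIntegral.integral_const_mul]
        rw [Dsum]
        have h1 : ((a.1+b.1, a.2+b.2) : ℤ × ℤ) ≠ (0, 0) := by
          simp only [ne_eq, Prod.mk.injEq, not_and]
          intro h h'
          apply hab'
          have : -b = (-b.1, -b.2) := rfl
          rw [this]
          exact Prod.ext_iff.mpr ⟨by omega, by omega⟩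
        have h2 : ((a.1-b.1, a.2-b.2) : ℤ × ℤ) ≠ (0, 0) := by
          simp only [ne_eq, Prod.mk.injEq, not_and]
          intro h h'
          exact hab (Prod.ext_iff.mpr ⟨by omega, by omega⟩)
        rw [if_neg h1, if_neg h2]
        ring
end
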